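/- Let A = diag(d₁,d₂) with |d₁|,|d₂| > 1 integers, q > 0, a ∈ ℤ. Suppose σ ∈ Ξ satisfies ∑_{p ∈ ℤ×qℤ} |σ(x-p)|² = 1 for all x ∈ ℝ², and there is m̃ ∈ X(q,(1-d₁d₂)a) with σ(Ax) = m̃(x)σ(x) for all x. Then the map R: X(q,a) → Ξ, R(F) = σ·F (pointwise product), is an injective C(𝕋²)-module homomorphism satisfying ⟨R(F), R(G)⟩_A = ⟨F,G⟩_A for all F,G ∈ X(q,a), where ⟨F,G⟩_A(s,t) = ∑_{k=0}^{q-1} conj(F(s,t-k))G(s,t-k). -/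

import Mathlib

open ComplexConjugate

noncomputable section

/-- The projective `C(𝕋²)`-module `X(q,a)`. -/
def Xset (q a : ℤ) : Set (ℝ × ℝ → ℂ) :=
  {F | Continuous F ∧ (∀ s t : ℝ, F (s + 1, t) = F (s, t)) ∧
    ∀ s t : ℝ, F (s, t - (q : ℝ)) =
      Complex.exp (2 * Real.pi * Complex.I * (a : ℂ) * (s : ℂ)) * F (s, t)}

/-- Continuous ℤ²-periodic functions on ℝ², i.e. the algebra `C(𝕋²)`. -/
def PerC (f : ℝ × ℝ → ℂ) : Prop :=
  Continuous f ∧ (∀ s t : ℝ, f (s + 1, t) = f (s, t)) ∧ ∀ s t : ℝ, f (s, t + 1) = f (s, t)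

/-- The ℤ²-periodization of the square modulus. -/
def perSum2 (ξ : ℝ × ℝ → ℂ) (x : ℝ × ℝ) : ℝ :=
  ∑' p : ℤ × ℤ, ‖ξ (x.1 - (p.1 : ℝ), x.2 - (p.2 : ℝ))‖ ^ 2

/-- Membership in the module Ξ over `C(𝕋²)`. -/
def InXi2 (ξ : ℝ × ℝ → ℂ) : Prop :=
  Continuous ξ ∧ (∃ M, ∀ x, ‖ξ x‖ ≤ M) ∧
  (∀ x : ℝ × ℝ, Summable fun p : ℤ × ℤ => ‖ξ (x.1 - (p.1 : ℝ), x.2 - (p.2 : ℝ))‖ ^ 2) ∧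
  (∃ K, ∀ x, perSum2 ξ x ≤ K) ∧ Continuous (perSum2 ξ)

/-- The `C(𝕋²)`-valued inner product on Ξ: the ℤ²-periodization of conj(ξ)·η. -/
def innerA2 (ξ η : ℝ × ℝ → ℂ) (x : ℝ × ℝ) : ℂ :=
  ∑' p : ℤ × ℤ, conj (ξ (x.1 - (p.1 : ℝ), x.2 - (p.2 : ℝ))) * η (x.1 - (p.1 : ℝ), x.2 - (p.2 : ℝ))


/-! Since `|σ|²` periodizes to `1` over `ℤ × qℤ` and `conj(F)·G` is `ℤ × qℤ`-periodic for
`F, G ∈ X(q,a)`, splitting the `ℤ²`-periodization of `conj(σF)·σG` into the `q` cosets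
`(0, k) + ℤ × qℤ` gives `⟨σF, σG⟩_A = ∑_{k<q} conj(F)·G (s, t - k)`. For injectivity, `σ` cannot
vanish on a whole coset `x + ℤ × qℤ`, while `|F - G|` is constant on it. -/

open Function Finset

section InfiniteSum

variable {E : Type*} [AddCommMonoid E] [TopologicalSpace E] [ContinuousAdd E]

theorem hasSum_fintype_prod {ι β : Type*} [Fintype ι] {f : ι × β → E} {b : ι → E}
    (h : ∀ i, HasSum (fun x => f (i, x)) (b i)) : HasSum f (∑ i, b i) := by
  classical
  have hslice : ∀ i, HasSum (fun p : ι × β => if p.1 = i then f p else 0) (b i) := fun i => by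
    refine ((Prod.mk_right_injective i).hasSum_iff fun p hp => ?_).1
      (by simpa [comp_def] using h i)
    rw [if_neg]
    rintro rfl
    exact hp ⟨p.2, rfl⟩
  simpa using hasSum_sum fun i (_ : i ∈ univ) => hslice i

theorem hasSum_int_prod_of_residues {n : ℕ} [NeZero n] {f : ℤ × ℤ → E} {b : Fin n → E}
    (h : ∀ k : Fin n, HasSum (fun p : ℤ × ℤ => f (p.1, p.2 * n + k)) (b k)) :
    HasSum f (∑ k, b k) := by
  let ψ : Fin n × (ℤ × ℤ) ≃ ℤ × ℤ :=
    (Equiv.prodComm _ _).trans ((Equiv.prodAssoc ℤ ℤ (Fin n)).trans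
      ((Equiv.refl ℤ).prodCongr (Int.divModEquiv n).symm))
  exact ψ.hasSum_iff.1 (hasSum_fintype_prod fun k => by simpa [ψ, Int.divModEquiv] using h k)

end InfiniteSum

def IsLatticePeriodic {E : Type*} (c : ℝ) (φ : ℝ × ℝ → E) : Prop :=
  ∀ (n m : ℤ) (s t : ℝ), φ (s - n, t - c * m) = φ (s, t)

namespace IsLatticePeriodic

variable {E : Type*} {c : ℝ} {φ : ℝ × ℝ → E}

theorem of_periodic (h₁ : ∀ t, Periodic (fun s => φ (s, t)) 1)
    (h₂ : ∀ s, Periodic (fun t => φ (s, t)) c) : IsLatticePeriodic c φ := fun n m s t =>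
  calc φ (s - n, t - c * m) = φ (s, t - c * m) := by
        simpa using (h₁ (t - c * m)).sub_int_mul_eq n
    _ = φ (s, t) := by simpa [mul_comm] using (h₂ s).sub_int_mul_eq m

theorem comp {F : Type*} (hφ : IsLatticePeriodic c φ) (g : E → F) :
    IsLatticePeriodic c (g ∘ φ) := fun n m s t => congrArg g (hφ n m s t)

theorem exists_bound {φ : ℝ × ℝ → ℝ} (hφ : IsLatticePeriodic c φ) (hc : 0 < c)
    (hcont : Continuous φ) : ∃ M, ∀ x, φ x ≤ M := by
  obtain ⟨M, hM⟩ := (isCompact_Icc.prod isCompact_Icc :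
    IsCompact (Set.Icc (0 : ℝ) 1 ×ˢ Set.Icc 0 c)).bddAbove_image hcont.continuousOn
  refine ⟨M, fun ⟨s, t⟩ => ?_⟩
  rw [← hφ (toIcoDiv one_pos 0 s) (toIcoDiv hc 0 t) s t]
  refine hM (Set.mem_image_of_mem _ ⟨Set.Ico_subset_Icc_self ?_, Set.Ico_subset_Icc_self ?_⟩)
  · simpa [toIcoMod] using toIcoMod_mem_Ico' one_pos s
  · simpa [toIcoMod, mul_comm] using toIcoMod_mem_Ico' hc t

variable [AddCommMonoid E] [TopologicalSpace E] [ContinuousAdd E] [Module ℝ E]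
  [ContinuousSMul ℝ E]

theorem hasSum_smul {q : ℤ} (hq : 0 < q) {w : ℝ × ℝ → ℝ}
    (hw : ∀ s t : ℝ, HasSum (fun p : ℤ × ℤ => w (s - p.1, t - q * p.2)) 1)
    (hφ : IsLatticePeriodic q φ) (s t : ℝ) :
    HasSum (fun p : ℤ × ℤ => w (s - p.1, t - p.2) • φ (s - p.1, t - p.2))
      (∑ k ∈ range q.toNat, φ (s, t - k)) := by
  have : NeZero q.toNat := ⟨by omega⟩
  have hqn : ((q.toNat : ℤ) : ℝ) = q := by exact_mod_cast Int.toNat_of_nonneg hq.le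
  rw [← Fin.sum_univ_eq_sum_range]
  refine hasSum_int_prod_of_residues fun k => ?_
  have hcoset : ∀ p : ℤ × ℤ, t - ((p.2 * q.toNat + k : ℤ) : ℝ) = t - k - q * p.2 := fun p => by
    push_cast [hqn]; ring
  have hslice := (hw s (t - k)).smul_const (φ (s, t - k))
  rw [one_smul] at hslice
  convert hslice using 2 with p
  rw [hcoset, hφ]

end IsLatticePeriodic

namespace Xset

variable {q a : ℤ} {σ F G : ℝ × ℝ → ℂ}

theorem norm_exp (a : ℤ) (s : ℝ) :
    ‖Complex.exp (2 * Real.pi * Complex.I * (a : ℂ) * (s : ℂ))‖ = 1 := by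
  rw [show 2 * (Real.pi : ℂ) * Complex.I * a * s = ((2 * Real.pi * a * s : ℝ) : ℂ) * Complex.I by
    push_cast; ring, Complex.norm_exp_ofReal_mul_I]

theorem conj_exp_mul_exp (a : ℤ) (s : ℝ) :
    conj (Complex.exp (2 * Real.pi * Complex.I * (a : ℂ) * (s : ℂ))) *
      Complex.exp (2 * Real.pi * Complex.I * (a : ℂ) * (s : ℂ)) = 1 := by
  rw [Complex.conj_mul', norm_exp]
  norm_num

theorem sub_mem (hF : F ∈ Xset q a) (hG : G ∈ Xset q a) : F - G ∈ Xset q a :=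
  ⟨hF.1.sub hG.1, fun s t => by simp [hF.2.1, hG.2.1],
    fun s t => by simp only [Pi.sub_apply, hF.2.2, hG.2.2, mul_sub]⟩

theorem isLatticePeriodic_norm (hF : F ∈ Xset q a) : IsLatticePeriodic q (fun x => ‖F x‖) :=
  .of_periodic (fun t s => by simp [hF.2.1]) fun s => by
    simpa using (show Periodic (fun t => ‖F (s, t)‖) (-q) from fun t => by
      simp [← sub_eq_add_neg, hF.2.2, norm_exp]).neg

theorem isLatticePeriodic_conj_mul (hF : F ∈ Xset q a) (hG : G ∈ Xset q a) :
    IsLatticePeriodic q (fun x => conj (F x) * G x) :=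
  .of_periodic (fun t s => by simp [hF.2.1, hG.2.1]) fun s => by
    simpa using (show Periodic (fun t => conj (F (s, t)) * G (s, t)) (-q) from fun t => by
      simp only [← sub_eq_add_neg, hF.2.2, hG.2.2, map_mul]
      linear_combination (conj (F (s, t)) * G (s, t)) * conj_exp_mul_exp a s).neg

theorem exists_bound (hq : 0 < q) (hF : F ∈ Xset q a) : ∃ M, ∀ x, ‖F x‖ ≤ M :=
  (isLatticePeriodic_norm hF).exists_bound (by exact_mod_cast hq) hF.1.norm

theorem hasSum_conj_mul_mul (hq : 0 < q)
    (hσ : ∀ s t : ℝ, HasSum (fun p : ℤ × ℤ => ‖σ (s - p.1, t - q * p.2)‖ ^ 2) 1)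
    (hF : F ∈ Xset q a) (hG : G ∈ Xset q a) (s t : ℝ) :
    HasSum (fun p : ℤ × ℤ => conj (σ (s - p.1, t - p.2) * F (s - p.1, t - p.2)) *
        (σ (s - p.1, t - p.2) * G (s - p.1, t - p.2)))
      (∑ k ∈ range q.toNat, conj (F (s, t - k)) * G (s, t - k)) := by
  convert (isLatticePeriodic_conj_mul hF hG).hasSum_smul hq (w := fun x => ‖σ x‖ ^ 2) hσ s t
    using 2 with p
  rw [Complex.real_smul, map_mul]
  push_cast [← Complex.conj_mul']
  ring

theorem hasSum_norm_mul_sq (hq : 0 < q)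
    (hσ : ∀ s t : ℝ, HasSum (fun p : ℤ × ℤ => ‖σ (s - p.1, t - q * p.2)‖ ^ 2) 1)
    (hF : F ∈ Xset q a) (s t : ℝ) :
    HasSum (fun p : ℤ × ℤ => ‖σ (s - p.1, t - p.2) * F (s - p.1, t - p.2)‖ ^ 2)
      (∑ k ∈ range q.toNat, ‖F (s, t - k)‖ ^ 2) := by
  simpa only [smul_eq_mul, norm_mul, mul_pow, Function.comp_apply] using
    ((isLatticePeriodic_norm hF).comp (· ^ 2)).hasSum_smul hq (w := fun x => ‖σ x‖ ^ 2) hσ s t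

theorem inXi2_mul (hq : 0 < q) (hσc : Continuous σ) (hσb : ∃ M, ∀ x, ‖σ x‖ ≤ M)
    (hσ : ∀ s t : ℝ, HasSum (fun p : ℤ × ℤ => ‖σ (s - p.1, t - q * p.2)‖ ^ 2) 1)
    (hF : F ∈ Xset q a) : InXi2 (fun x => σ x * F x) := by
  obtain ⟨Mσ, hMσ⟩ := hσb
  obtain ⟨MF, hMF⟩ := exists_bound hq hF
  have hsum (x : ℝ × ℝ) := hasSum_norm_mul_sq hq hσ hF x.1 x.2
  have hper : perSum2 (fun x => σ x * F x) = fun x => ∑ k ∈ range q.toNat, ‖F (x.1, x.2 - k)‖ ^ 2 :=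
    funext fun x => (hsum x).tsum_eq
  refine ⟨hσc.mul hF.1, ⟨Mσ * MF, fun x => ?_⟩, fun x => (hsum x).summable,
    ⟨q.toNat * MF ^ 2, fun x => ?_⟩, ?_⟩
  · rw [norm_mul]
    exact mul_le_mul (hMσ x) (hMF x) (norm_nonneg _) ((norm_nonneg _).trans (hMσ x))
  · rw [hper]
    calc ∑ k ∈ range q.toNat, ‖F (x.1, x.2 - k)‖ ^ 2 ≤ ∑ _k ∈ range q.toNat, MF ^ 2 :=
          sum_le_sum fun k _ => pow_le_pow_left₀ (norm_nonneg _) (hMF _) 2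
      _ = q.toNat * MF ^ 2 := by simp
  · rw [hper]
    exact continuous_finsetSum _ fun k _ => ((hF.1.comp (by fun_prop)).norm).pow 2

theorem eq_of_mul_eq
    (hσ : ∀ s t : ℝ, HasSum (fun p : ℤ × ℤ => ‖σ (s - p.1, t - q * p.2)‖ ^ 2) 1)
    (hF : F ∈ Xset q a) (hG : G ∈ Xset q a) (h : ∀ x, σ x * F x = σ x * G x) : F = G := by
  funext ⟨s, t⟩
  obtain ⟨p, hp⟩ : ∃ p : ℤ × ℤ, σ (s - p.1, t - q * p.2) ≠ 0 := by
    by_contra! h0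
    have h1 := hσ s t
    simp only [h0, norm_zero, ne_eq, OfNat.ofNat_ne_zero, not_false_eq_true, zero_pow] at h1
    exact one_ne_zero (h1.unique hasSum_zero)
  have hzero : (F - G) (s - p.1, t - q * p.2) = 0 := sub_eq_zero.2 (mul_left_cancel₀ hp (h _))
  have hnorm : ‖(F - G) (s, t)‖ = ‖(F - G) (s - p.1, t - q * p.2)‖ :=
    (isLatticePeriodic_norm (sub_mem hF hG) p.1 p.2 s t).symm
  rwa [hzero, norm_zero, norm_eq_zero, Pi.sub_apply, sub_eq_zero] at hnorm

end Xset

theorem stmt18_general (q a : ℤ) (hq : 0 < q)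
    (σ : ℝ × ℝ → ℂ) (hσΞ : InXi2 σ)
    (hσnorm : ∀ s t : ℝ,
      HasSum (fun p : ℤ × ℤ => ‖σ (s - (p.1 : ℝ), t - (q : ℝ) * (p.2 : ℝ))‖ ^ 2) 1) :
    -- R maps X(q,a) into Ξ
    (∀ F ∈ Xset q a, InXi2 (fun x => σ x * F x)) ∧
    -- R is additive
    (∀ F ∈ Xset q a, ∀ G ∈ Xset q a,
      (fun x => σ x * (F + G) x) = (fun x => σ x * F x) + fun x => σ x * G x) ∧
    -- R is a C(𝕋²)-module map
    (∀ F ∈ Xset q a, ∀ f, PerC f →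
      (fun x => σ x * (f x * F x)) = fun x => f x * (σ x * F x)) ∧
    -- R is injective on X(q,a)
    (∀ F ∈ Xset q a, ∀ G ∈ Xset q a,
      (fun x => σ x * F x) = (fun x => σ x * G x) → F = G) ∧
    -- R preserves the C(𝕋²)-valued inner products
    (∀ F ∈ Xset q a, ∀ G ∈ Xset q a, ∀ s t : ℝ,
      innerA2 (fun x => σ x * F x) (fun x => σ x * G x) (s, t) =
        ∑ k ∈ Finset.range q.toNat, conj (F (s, t - (k : ℝ))) * G (s, t - (k : ℝ))) :=
  ⟨fun _ hF => Xset.inXi2_mul hq hσΞ.1 hσΞ.2.1 hσnorm hF,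
    fun _ _ _ _ => funext fun _ => mul_add _ _ _,
    fun _ _ _ _ => funext fun _ => mul_left_comm _ _ _,
    fun _ hF _ hG h => Xset.eq_of_mul_eq hσnorm hF hG (congrFun h),
    fun _ hF _ hG s t => (Xset.hasSum_conj_mul_mul hq hσnorm hF hG s t).tsum_eq⟩

/-- The "scaling function" theorem: if σ ∈ Ξ has ℤ×qℤ-periodization of |σ|²
identically 1 and satisfies the scaling relation σ(Ax) = m̃(x)σ(x) with
m̃ ∈ X(q,(1-d₁d₂)a), then R(F) = σF is an injective C(𝕋²)-module homomorphism
from X(q,a) into Ξ with ⟨R(F),R(G)⟩_A = ⟨F,G⟩_A. -/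
theorem stmt18 (q a d₁ d₂ : ℤ) (hq : 0 < q) (hd₁ : 1 < |d₁|) (hd₂ : 1 < |d₂|)
    (σ : ℝ × ℝ → ℂ) (hσΞ : InXi2 σ)
    (hσnorm : ∀ s t : ℝ,
      HasSum (fun p : ℤ × ℤ => ‖σ (s - (p.1 : ℝ), t - (q : ℝ) * (p.2 : ℝ))‖ ^ 2) 1)
    (mt : ℝ × ℝ → ℂ) (hmt : mt ∈ Xset q ((1 - d₁ * d₂) * a))
    (hscal : ∀ s t : ℝ, σ ((d₁ : ℝ) * s, (d₂ : ℝ) * t) = mt (s, t) * σ (s, t)) :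
    -- R maps X(q,a) into Ξ
    (∀ F ∈ Xset q a, InXi2 (fun x => σ x * F x)) ∧
    -- R is additive
    (∀ F ∈ Xset q a, ∀ G ∈ Xset q a,
      (fun x => σ x * (F + G) x) = (fun x => σ x * F x) + fun x => σ x * G x) ∧
    -- R is a C(𝕋²)-module map
    (∀ F ∈ Xset q a, ∀ f, PerC f →
      (fun x => σ x * (f x * F x)) = fun x => f x * (σ x * F x)) ∧
    -- R is injective on X(q,a)
    (∀ F ∈ Xset q a, ∀ G ∈ Xset q a,
      (fun x => σ x * F x) = (fun x => σ x * G x) → F = G) ∧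
    -- R preserves the C(𝕋²)-valued inner products
    (∀ F ∈ Xset q a, ∀ G ∈ Xset q a, ∀ s t : ℝ,
      innerA2 (fun x => σ x * F x) (fun x => σ x * G x) (s, t) =
        ∑ k ∈ Finset.range q.toNat, conj (F (s, t - (k : ℝ))) * G (s, t - (k : ℝ))) :=
  stmt18_general q a hq σ hσΞ hσnorm
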